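/- For a monoid S: (i) every retract of an InC-injective right S-act is InC-injective; (ii) every coproduct of InC-injective right S-acts is InC-injective if and only if S is left reversible. -/

import Mathlib

universe u

/-- A right `S`-act structure on a nonempty type `A`: a right action of the monoid `S`. -/
class RightAct (S : Type u) [Monoid S] (A : Type u) : Type u where
  act : A → S → A
  act_one : ∀ a : A, act a 1 = a
  act_mul : ∀ (a : A) (s t : S), act (act a s) t = act a (s * t)
  nonempty : Nonempty A

infixl:70 " ⊛ " => RightAct.act

/-- `S` is left reversible: every two right ideals (equiv. principal ones) intersect. -/
def LeftReversible (S : Type u) [Monoid S] : Prop :=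
  ∀ a b : S, ∃ u v : S, a * u = b * v

/-- A left zero element of the monoid `S`. -/
def IsLeftZero (S : Type u) [Monoid S] (z : S) : Prop :=
  ∀ s : S, z * s = z

/-- `f : A → B` is a homomorphism of right `S`-acts. -/
def IsActHom (S : Type u) [Monoid S] {A B : Type u} [RightAct S A] [RightAct S B]
    (f : A → B) : Prop :=
  ∀ (a : A) (s : S), f (a ⊛ s) = f a ⊛ s

/-- The restriction of `f : A → B` to the subset `C` is a homomorphism of right `S`-acts. -/
def IsActHomOn (S : Type u) [Monoid S] {A B : Type u} [RightAct S A] [RightAct S B]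
    (f : A → B) (C : Set A) : Prop :=
  ∀ a ∈ C, ∀ s : S, f (a ⊛ s) = f a ⊛ s

/-- A subact: a nonempty subset closed under the action. -/
def IsSubact (S : Type u) [Monoid S] {A : Type u} [RightAct S A] (C : Set A) : Prop :=
  C.Nonempty ∧ ∀ a ∈ C, ∀ s : S, a ⊛ s ∈ C

/-- A zero element of an act: fixed by the action of every `s ∈ S`. -/
def IsZeroElem (S : Type u) [Monoid S] {A : Type u} [RightAct S A] (θ : A) : Prop :=
  ∀ s : S, θ ⊛ s = θ

/-- A subset `D` (viewed as an act) is decomposable: it is the disjoint union of two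
nonempty subacts. -/
def DecomposableSet (S : Type u) [Monoid S] {A : Type u} [RightAct S A] (D : Set A) : Prop :=
  ∃ B C : Set A, IsSubact S B ∧ IsSubact S C ∧ B ∪ C = D ∧ B ∩ C = ∅

/-- A subset (viewed as an act) is indecomposable. -/
def IndecomposableSet (S : Type u) [Monoid S] {A : Type u} [RightAct S A] (D : Set A) : Prop :=
  ¬ DecomposableSet S D

/-- The act `A` is decomposable. -/
def Decomposable (S : Type u) [Monoid S] (A : Type u) [RightAct S A] : Prop :=
  DecomposableSet S (Set.univ : Set A)

/-- The act `A` is indecomposable. -/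
def Indecomposable (S : Type u) [Monoid S] (A : Type u) [RightAct S A] : Prop :=
  ¬ Decomposable S A

/-- A cyclic act: generated by a single element. -/
def CyclicAct (S : Type u) [Monoid S] (A : Type u) [RightAct S A] : Prop :=
  ∃ a : A, ∀ x : A, ∃ s : S, x = a ⊛ s

/-- `A` is a retract of `B`. -/
def IsRetractOf (S : Type u) [Monoid S] (A B : Type u) [RightAct S A] [RightAct S B] : Prop :=
  ∃ (i : A → B) (p : B → A), IsActHom S i ∧ IsActHom S p ∧ ∀ a : A, p (i a) = a

/-- `Q` is an injective act: every homomorphism from a subact `C` of any act `B` into `Q`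
extends to `B`. -/
def ActInjective (S : Type u) [Monoid S] (Q : Type u) [RightAct S Q] : Prop :=
  ∀ (B : Type u) [RightAct S B], ∀ C : Set B, IsSubact S C →
    ∀ f : B → Q, IsActHomOn S f C →
      ∃ g : B → Q, IsActHom S g ∧ Set.EqOn g f C

/-- `Q` is InC-injective: injective relative to all embeddings into indecomposable acts. -/
def InCInjective (S : Type u) [Monoid S] (Q : Type u) [RightAct S Q] : Prop :=
  ∀ (B : Type u) [RightAct S B], Indecomposable S B → ∀ C : Set B, IsSubact S C →
    ∀ f : B → Q, IsActHomOn S f C →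
      ∃ g : B → Q, IsActHom S g ∧ Set.EqOn g f C

/-- `Q` is InD-injective: injective relative to all embeddings of indecomposable acts. -/
def InDInjective (S : Type u) [Monoid S] (Q : Type u) [RightAct S Q] : Prop :=
  ∀ (B : Type u) [RightAct S B], ∀ C : Set B, IsSubact S C → IndecomposableSet S C →
    ∀ f : B → Q, IsActHomOn S f C →
      ∃ g : B → Q, IsActHom S g ∧ Set.EqOn g f C

/-- `Q` is PInD-injective: every monomorphism from an indecomposable subact extends. -/
def PInDInjective (S : Type u) [Monoid S] (Q : Type u) [RightAct S Q] : Prop :=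
  ∀ (B : Type u) [RightAct S B], ∀ C : Set B, IsSubact S C → IndecomposableSet S C →
    ∀ f : B → Q, IsActHomOn S f C → Set.InjOn f C →
      ∃ g : B → Q, IsActHom S g ∧ Set.EqOn g f C

/-- `A` is quasi injective: homomorphisms from subacts of `A` to `A` extend to `A`. -/
def QuasiInjective (S : Type u) [Monoid S] (A : Type u) [RightAct S A] : Prop :=
  ∀ C : Set A, IsSubact S C → ∀ f : A → A, IsActHomOn S f C →
    ∃ g : A → A, IsActHom S g ∧ Set.EqOn g f C

/-- `A` is pseudo injective: monomorphisms from subacts of any act into `A` extend. -/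
def PseudoInjective (S : Type u) [Monoid S] (A : Type u) [RightAct S A] : Prop :=
  ∀ (C : Type u) [RightAct S C], ∀ B : Set C, IsSubact S B →
    ∀ f : C → A, IsActHomOn S f B → Set.InjOn f B →
      ∃ g : C → A, IsActHom S g ∧ Set.EqOn g f B

/-- A subact `Q` of `A` (viewed as an act in its own right) is injective. -/
def ActInjectiveSet (S : Type u) [Monoid S] {A : Type u} [RightAct S A] (Q : Set A) : Prop :=
  ∀ (B : Type u) [RightAct S B], ∀ C : Set B, IsSubact S C →
    ∀ f : B → A, IsActHomOn S f C → (∀ c ∈ C, f c ∈ Q) →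
      ∃ g : B → A, IsActHom S g ∧ (∀ b : B, g b ∈ Q) ∧ Set.EqOn g f C

/-- A subact `Q` of `A` (viewed as an act in its own right) is InD-injective. -/
def InDInjectiveSet (S : Type u) [Monoid S] {A : Type u} [RightAct S A] (Q : Set A) : Prop :=
  ∀ (B : Type u) [RightAct S B], ∀ C : Set B, IsSubact S C → IndecomposableSet S C →
    ∀ f : B → A, IsActHomOn S f C → (∀ c ∈ C, f c ∈ Q) →
      ∃ g : B → A, IsActHom S g ∧ (∀ b : B, g b ∈ Q) ∧ Set.EqOn g f C

/-- A subact `Q` of `A` (viewed as an act in its own right) is PInD-injective. -/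
def PInDInjectiveSet (S : Type u) [Monoid S] {A : Type u} [RightAct S A] (Q : Set A) : Prop :=
  ∀ (B : Type u) [RightAct S B], ∀ C : Set B, IsSubact S C → IndecomposableSet S C →
    ∀ f : B → A, IsActHomOn S f C → Set.InjOn f C → (∀ c ∈ C, f c ∈ Q) →
      ∃ g : B → A, IsActHom S g ∧ (∀ b : B, g b ∈ Q) ∧ Set.EqOn g f C

/-- The monoid `S` as a right act over itself, by multiplication. -/
instance selfAct (S : Type u) [Monoid S] : RightAct S S where
  act a s := a * s
  act_one := mul_one
  act_mul a s t := mul_assoc a s t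
  nonempty := ⟨1⟩

/-- `Q` is weakly injective: homomorphisms from right ideals of `S` into `Q` extend to `S`. -/
def WeaklyInjective (S : Type u) [Monoid S] (Q : Type u) [RightAct S Q] : Prop :=
  ∀ I : Set S, IsSubact S I → ∀ f : S → Q, IsActHomOn S f I →
    ∃ g : S → Q, IsActHom S g ∧ Set.EqOn g f I

/-- The relation whose equivalence closure has the indecomposable components as classes. -/
def ActRel (S : Type u) [Monoid S] {A : Type u} [RightAct S A] (a b : A) : Prop :=
  ∃ s : S, b = a ⊛ s

/-- The indecomposable component of the element `a` of an act. -/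
def ActComponent (S : Type u) [Monoid S] {A : Type u} [RightAct S A] (a : A) : Set A :=
  {b | Relation.EqvGen (ActRel S) a b}

/-- The coproduct (disjoint union) of a family of acts. -/
instance sigmaAct (S : Type u) [Monoid S] {I : Type u} [Nonempty I] (A : I → Type u)
    [∀ i, RightAct S (A i)] : RightAct S (Σ i, A i) where
  act x s := ⟨x.1, x.2 ⊛ s⟩
  act_one x := by cases x; simp [RightAct.act_one]
  act_mul x s t := by cases x; simp [RightAct.act_mul]
  nonempty := ⟨⟨Classical.arbitrary I, Classical.choice (RightAct.nonempty (S := S))⟩⟩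


/-!
Retracts inherit InC-injectivity by composing extensions with the retraction.

If `S` is left reversible, any two elements of an indecomposable act have a common translate
`a ⊛ s = b ⊛ t`, so a homomorphism from a subact of it into a coproduct lands in a single
summand, where it can be extended. Conversely, the coproduct of two one-element acts is
InC-injective. If `aS ∩ bS = ∅`, sending `aS` to one point and `bS` to the other is a
homomorphism on the right ideal `aS ∪ bS`; but its extension `g` to the indecomposable act `S`
is constant, `g x = g 1 ⊛ x = g 1`, as every element of the target is fixed by `S`.
-/

open Function

section

variable {S : Type u} [Monoid S]

theorem InCInjective.of_isRetractOf {A B : Type u} [RightAct S A] [RightAct S B]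
    (hB : InCInjective S B) (hAB : IsRetractOf S A B) : InCInjective S A := by
  obtain ⟨i, p, hi, hp, hpi⟩ := hAB
  intro X _ hX C hC f hf
  obtain ⟨g, hg, hgf⟩ := hB X hX C hC (i ∘ f) fun c hc s => by
    simp only [comp_apply, hf c hc s, hi (f c) s]
  refine ⟨p ∘ g, fun x s => by simp only [comp_apply, hg x s, hp (g x) s], fun c hc => ?_⟩
  simp only [comp_apply, hgf hc, hpi]

theorem selfAct_act (a s : S) : (selfAct S).act a s = a * s := rfl

variable (S) in
theorem indecomposable_self : Indecomposable S S := by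
  rintro ⟨B, C, ⟨⟨b, hb⟩, hBS⟩, ⟨⟨c, hc⟩, hCS⟩, hBC, hdisj⟩
  have h1 : (1 : S) ∈ B ∪ C := hBC ▸ Set.mem_univ 1
  rcases h1 with h1 | h1
  · have hcB : c ∈ B := by simpa only [selfAct_act, one_mul] using hBS 1 h1 c
    exact (Set.eq_empty_iff_forall_notMem.mp hdisj) c ⟨hcB, hc⟩
  · have hbC : b ∈ C := by simpa only [selfAct_act, one_mul] using hCS 1 h1 b
    exact (Set.eq_empty_iff_forall_notMem.mp hdisj) b ⟨hb, hbC⟩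

theorem InCInjective.weaklyInjective {Q : Type u} [RightAct S Q] (hQ : InCInjective S Q) :
    WeaklyInjective S Q :=
  hQ S (indecomposable_self S)

theorem leftReversible_of_weaklyInjective {Q : Type u} [RightAct S Q]
    (hQ : WeaklyInjective S Q) (hzero : ∀ θ : Q, IsZeroElem S θ) {θ₁ θ₂ : Q} (hne : θ₁ ≠ θ₂) :
    LeftReversible S := by
  classical
  intro a b
  by_contra! hdisj
  have hbS : ∀ v s w, b * v * s ≠ a * w := fun v s w h =>
    hdisj w (v * s) (by rw [← mul_assoc, h])
  let C : Set S := {x | (∃ u, x = a * u) ∨ ∃ v, x = b * v}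
  have hC : IsSubact S C := by
    refine ⟨⟨a, Or.inl ⟨1, (mul_one a).symm⟩⟩, ?_⟩
    rintro x (⟨u, rfl⟩ | ⟨v, rfl⟩) s
    · exact Or.inl ⟨u * s, mul_assoc a u s⟩
    · exact Or.inr ⟨v * s, mul_assoc b v s⟩
  let f : S → Q := fun x => if ∃ u, x = a * u then θ₁ else θ₂
  have hf : IsActHomOn S f C := by
    rintro c (⟨u, rfl⟩ | ⟨v, rfl⟩) s <;> rw [hzero] <;> change f (_ * s) = _
    · simp only [f, if_pos (⟨u * s, mul_assoc a u s⟩ : ∃ w, a * u * s = a * w),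
        if_pos (⟨u, rfl⟩ : ∃ w, a * u = a * w)]
    · have h1 : ¬∃ w, b * v * s = a * w := fun ⟨w, h⟩ => hbS v s w h
      have h2 : ¬∃ w, b * v = a * w := fun ⟨w, h⟩ => hbS v 1 w (by rwa [mul_one])
      simp only [f, if_neg h1, if_neg h2]
  obtain ⟨g, hg, hgf⟩ := hQ C hC f hf
  have hconst : ∀ x : S, g x = g 1 := fun x => by
    rw [← hzero (g 1) x, ← hg, selfAct_act, one_mul]
  have hfa : f a = θ₁ := if_pos ⟨1, (mul_one a).symm⟩
  have hfb : f b = θ₂ := if_neg fun ⟨u, hu⟩ => hdisj u 1 (by rw [mul_one, ← hu])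
  apply hne
  rw [← hfa, ← hfb, ← hgf (Or.inl ⟨1, (mul_one a).symm⟩), ← hgf (Or.inr ⟨1, (mul_one b).symm⟩),
    hconst a, hconst b]

instance punitAct : RightAct S PUnit where
  act _ _ := PUnit.unit
  act_one _ := rfl
  act_mul _ _ _ := rfl
  nonempty := ⟨PUnit.unit⟩

variable (S) in
theorem inCInjective_punit : InCInjective S PUnit.{u + 1} :=
  fun _ _ _ _ _ _ _ => ⟨fun _ => PUnit.unit, fun _ _ => rfl, fun _ _ => rfl⟩

theorem Indecomposable.mem_of_isSubact {B : Type u} [RightAct S B] (hB : Indecomposable S B)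
    {D : Set B} (hD : IsSubact S D) (hDc : ∀ x ∉ D, ∀ s : S, x ⊛ s ∉ D) (x : B) : x ∈ D := by
  by_contra hx
  exact hB ⟨D, Dᶜ, hD, ⟨⟨x, hx⟩, hDc⟩, Set.union_compl_self D, Set.inter_compl_self D⟩

theorem LeftReversible.exists_act_eq_act_trans (hS : LeftReversible S) {B : Type u}
    [RightAct S B] {a b c : B} {s t s' t' : S} (hab : a ⊛ s = b ⊛ t) (hbc : b ⊛ s' = c ⊛ t') :
    ∃ p q : S, a ⊛ p = c ⊛ q := by
  obtain ⟨u, v, huv⟩ := hS t s'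
  refine ⟨s * u, t' * v, ?_⟩
  rw [← RightAct.act_mul, hab, RightAct.act_mul, huv, ← RightAct.act_mul, hbc,
    RightAct.act_mul]

theorem Indecomposable.exists_act_eq_act (hS : LeftReversible S) {B : Type u} [RightAct S B]
    (hB : Indecomposable S B) (a b : B) : ∃ s t : S, a ⊛ s = b ⊛ t := by
  have hstep : ∀ (x : B) (s : S), (x ⊛ s) ⊛ (1 : S) = x ⊛ s := fun x s => RightAct.act_one _
  refine hB.mem_of_isSubact (D := {x | ∃ s t : S, a ⊛ s = x ⊛ t})
    ⟨⟨a, (1 : S), (1 : S), rfl⟩, fun x ⟨s, t, h⟩ r =>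
      hS.exists_act_eq_act_trans h (hstep x r).symm⟩ ?_ b
  rintro x hx r ⟨s, t, h⟩
  exact hx (hS.exists_act_eq_act_trans h (hstep x r))

theorem InCInjective.extend_of_mem_range {P Q B : Type u} [RightAct S P] [RightAct S Q]
    [RightAct S B] (hP : InCInjective S P) {j : P → Q} (hj : IsActHom S j) (hinj : Injective j)
    (hB : Indecomposable S B) {C : Set B} (hC : IsSubact S C) {f : B → Q}
    (hf : IsActHomOn S f C) (hrange : ∀ c ∈ C, f c ∈ Set.range j) :
    ∃ g : B → Q, IsActHom S g ∧ Set.EqOn g f C := by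
  have : Nonempty P := RightAct.nonempty (S := S)
  have hjf : ∀ c ∈ C, j (invFun j (f c)) = f c := fun c hc => invFun_eq (hrange c hc)
  have hf' : IsActHomOn S (invFun j ∘ f) C := fun c hc s => hinj <| by
    rw [comp_apply, comp_apply, hj _ s, hjf c hc, hjf _ (hC.2 c hc s), hf c hc s]
  obtain ⟨g, hg, hgf⟩ := hP B hB C hC _ hf'
  refine ⟨j ∘ g, fun x s => by simp only [comp_apply, hg x s, hj (g x) s], fun c hc => ?_⟩
  simp only [comp_apply, hgf hc, hjf c hc]

theorem sigma_fst_eq_of_isActHomOn (hS : LeftReversible S) {I : Type u} [Nonempty I]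
    {A : I → Type u} [∀ i, RightAct S (A i)] {B : Type u} [RightAct S B]
    (hB : Indecomposable S B) {C : Set B} {f : B → Σ i, A i} (hf : IsActHomOn S f C)
    {c c' : B} (hc : c ∈ C) (hc' : c' ∈ C) : (f c).1 = (f c').1 := by
  obtain ⟨s, t, h⟩ := hB.exists_act_eq_act hS c c'
  calc (f c).1 = (f c ⊛ s).1 := rfl
    _ = (f c' ⊛ t).1 := by rw [← hf c hc, ← hf c' hc', h]
    _ = (f c').1 := rfl

theorem InCInjective.sigma (hS : LeftReversible S) {I : Type u} [Nonempty I] {A : I → Type u}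
    [∀ i, RightAct S (A i)] (hA : ∀ i, InCInjective S (A i)) : InCInjective S (Σ i, A i) := by
  intro B _ hB C hC f hf
  obtain ⟨c₀, hc₀⟩ := hC.1
  refine (hA (f c₀).1).extend_of_mem_range (fun _ _ => rfl) sigma_mk_injective hB hC hf
    fun c hc => ?_
  have hfc := sigma_fst_eq_of_isActHomOn hS hB hf hc hc₀
  generalize f c = y at hfc ⊢
  obtain ⟨i, x⟩ := y
  subst hfc
  exact ⟨x, rfl⟩

end

/-- (i) retracts of InC-injective acts are InC-injective; (ii) all
coproducts of InC-injective acts are InC-injective iff `S` is left reversible. -/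
theorem retract_and_coproduct_inCInjective (S : Type u) [Monoid S] :
    (∀ (A B : Type u) [RightAct S A] [RightAct S B],
        InCInjective S B → IsRetractOf S A B → InCInjective S A) ∧
    ((∀ (I : Type u) [Nonempty I] (A : I → Type u) [∀ i, RightAct S (A i)],
        (∀ i, InCInjective S (A i)) → InCInjective S (Σ i, A i)) ↔
      LeftReversible S) := by
  refine ⟨fun A B _ _ hB hAB => hB.of_isRetractOf hAB, fun hcop => ?_,
    fun hS I _ A _ hA => InCInjective.sigma hS hA⟩
  have hpair := hcop (ULift Bool) (fun _ => PUnit) fun _ => inCInjective_punit S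
  exact leftReversible_of_weaklyInjective hpair.weaklyInjective (fun _ _ => rfl)
    (θ₁ := ⟨⟨false⟩, PUnit.unit⟩) (θ₂ := ⟨⟨true⟩, PUnit.unit⟩) (by simp)
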